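/- Let H be a real Hilbert space, ℓ ≥ 0, and let f : H → ℝ be a convex, lower semicontinuous function. If ‖x‖ − ℓ ≤ ‖prox_f(x + y) − y‖ for all x, y ∈ H, then f is ℓ-Lipschitz. -/

import Mathlib

open scoped InnerProductSpace
noncomputable section

variable {H : Type*} [NormedAddCommGroup H] [InnerProductSpace ℝ H] [CompleteSpace H]

/-- `p` is the proximal point of the real-valued function `f` at `x`,
i.e. `p` minimizes `y ↦ f y + (1/2)‖x - y‖²`. -/
def IsProxR (f : H → ℝ) (x p : H) : Prop :=
  ∀ y : H, f p + (1:ℝ)/2 * ‖x - p‖ ^ 2 ≤ f y + (1:ℝ)/2 * ‖x - y‖ ^ 2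

/-!
A point `p = prox_f x` satisfies the variational inequality `f p + ⟪x - p, z - p⟫ ≤ f z`,
i.e. `x - p` is a subgradient of `f` at `p`. Taking `x := w - prox_f w` and `y := prox_f w` in the
hypothesis gives `‖w - prox_f w‖ ≤ ℓ`, so at every point of the range of `prox_f` the function `f`
has a subgradient of norm at most `ℓ`, whence `f p ≤ f z + ℓ ‖p - z‖`.
Since `id - prox_f` is nonexpansive, the Banach fixed point theorem gives, for `θ < 1`, a point
`x = u + θ (x - prox_f x)`; then `‖prox_f x - u‖ ≤ (1 - θ) ℓ`, so the range of `prox_f` is dense.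
Lower semicontinuity of `f` extends the one-sided Lipschitz bound from this range to all of `H`.
-/

section DenseRange

variable {E : Type*} [NormedAddCommGroup E] [NormedSpace ℝ E] [CompleteSpace E]

theorem exists_add_smul_eq_of_lipschitzWith_one {g : E → E} (hg : LipschitzWith 1 g) (u : E)
    {θ : ℝ} (hθ₀ : 0 ≤ θ) (hθ₁ : θ < 1) : ∃ x, u + θ • g x = x := by
  have hF : ContractingWith ⟨θ, hθ₀⟩ fun x => u + θ • g x := by
    refine ⟨by exact_mod_cast hθ₁, LipschitzWith.of_dist_le_mul fun a b => ?_⟩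
    rw [dist_add_left, dist_smul₀, Real.norm_of_nonneg hθ₀]
    show θ * dist (g a) (g b) ≤ θ * dist a b
    simpa using mul_le_mul_of_nonneg_left (hg.dist_le_mul a b) hθ₀
  exact ⟨_, hF.fixedPoint_isFixedPt⟩

theorem denseRange_of_lipschitzWith_one_sub {P : E → E} (hP : LipschitzWith 1 fun x => x - P x)
    {ℓ : ℝ} (hb : ∀ x, ‖x - P x‖ ≤ ℓ) : DenseRange P := by
  have hℓ : 0 ≤ ℓ := (norm_nonneg _).trans (hb 0)
  refine Metric.denseRange_iff.2 fun u ε hε => ?_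
  set θ := ℓ / (ℓ + ε)
  have hθ : θ * (ℓ + ε) = ℓ := div_mul_cancel₀ _ (by positivity)
  have hθ₁ : θ < 1 := (div_lt_one (by positivity)).2 (by linarith)
  obtain ⟨x, hx⟩ := exists_add_smul_eq_of_lipschitzWith_one hP u (by positivity) hθ₁
  have hux : u - P x = (1 - θ) • (x - P x) := by linear_combination (norm := module) hx
  refine ⟨x, ?_⟩
  calc dist u (P x) = (1 - θ) * ‖x - P x‖ := by
        rw [dist_eq_norm, hux, norm_smul, Real.norm_of_nonneg (by linarith)]
    _ ≤ (1 - θ) * ℓ := mul_le_mul_of_nonneg_left (hb x) (by linarith)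
    _ = ε * θ := by linear_combination -hθ
    _ < ε := mul_lt_of_lt_one_right hε hθ₁

end DenseRange

namespace IsProxR

variable {E : Type*} [NormedAddCommGroup E] [InnerProductSpace ℝ E] {f : E → ℝ}

theorem add_inner_le (hconv : ConvexOn ℝ Set.univ f) {x p : E} (hp : IsProxR f x p) (z : E) :
    f p + ⟪x - p, z - p⟫_ℝ ≤ f z := by
  have hsmall : ∀ t : ℝ, 0 < t → t ≤ 1 →
      f p + ⟪x - p, z - p⟫_ℝ - f z ≤ t * (‖z - p‖ ^ 2 / 2) := by
    intro t ht ht₁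
    have hmin := hp (p + t • (z - p))
    have hcvx : f (p + t • (z - p)) ≤ (1 - t) * f p + t * f z := by
      have := hconv.2 (Set.mem_univ p) (Set.mem_univ z) (sub_nonneg.2 ht₁) ht.le (by ring)
      rwa [show (1 - t) • p + t • z = p + t • (z - p) by module] at this
    have hnorm : ‖x - (p + t • (z - p))‖ ^ 2
        = ‖x - p‖ ^ 2 - 2 * t * ⟪x - p, z - p⟫_ℝ + t ^ 2 * ‖z - p‖ ^ 2 := by
      rw [show x - (p + t • (z - p)) = (x - p) - t • (z - p) by module, norm_sub_sq_real,
        real_inner_smul_right, norm_smul, mul_pow, Real.norm_eq_abs, sq_abs]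
      ring
    have : t * (f p + ⟪x - p, z - p⟫_ℝ - f z) ≤ t * (t * (‖z - p‖ ^ 2 / 2)) := by
      rw [hnorm] at hmin
      linarith
    exact le_of_mul_le_mul_left this ht
  have hlim : Filter.Tendsto (fun t : ℝ => t * (‖z - p‖ ^ 2 / 2)) (nhdsWithin 0 (Set.Ioi 0))
      (nhds 0) :=
    tendsto_nhdsWithin_of_tendsto_nhds ((continuous_mul_const _).tendsto' 0 0 (zero_mul _))
  have := ge_of_tendsto hlim (Filter.eventually_of_mem (Ioc_mem_nhdsGT one_pos)
    fun t ht => hsmall t ht.1 ht.2)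
  linarith

theorem le_add_mul_norm (hconv : ConvexOn ℝ Set.univ f) {x p : E} {ℓ : ℝ} (hp : IsProxR f x p)
    (hℓ : ‖x - p‖ ≤ ℓ) (z : E) : f p ≤ f z + ℓ * ‖p - z‖ := by
  have hsub := hp.add_inner_le hconv z
  have hcs : ⟪x - p, p - z⟫_ℝ ≤ ℓ * ‖p - z‖ :=
    (real_inner_le_norm _ _).trans (mul_le_mul_of_nonneg_right hℓ (norm_nonneg _))
  rw [← neg_sub p z, inner_neg_right] at hsub
  linarith

theorem inner_sub_sub_nonneg (hconv : ConvexOn ℝ Set.univ f) {a b pa pb : E}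
    (ha : IsProxR f a pa) (hb : IsProxR f b pb) : 0 ≤ ⟪(a - pa) - (b - pb), pa - pb⟫_ℝ := by
  have h₁ := ha.add_inner_le hconv pb
  have h₂ := hb.add_inner_le hconv pa
  rw [← neg_sub pa pb, inner_neg_right] at h₁
  rw [inner_sub_left]
  linarith

theorem norm_sub_sub_le (hconv : ConvexOn ℝ Set.univ f) {a b pa pb : E}
    (ha : IsProxR f a pa) (hb : IsProxR f b pb) : ‖(a - pa) - (b - pb)‖ ≤ ‖a - b‖ := by
  have hmono := inner_sub_sub_nonneg hconv ha hb
  have hsplit : a - b = ((a - pa) - (b - pb)) + (pa - pb) := by abel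
  refine (sq_le_sq₀ (norm_nonneg _) (norm_nonneg _)).1 ?_
  rw [hsplit, norm_add_sq_real]
  nlinarith [sq_nonneg ‖pa - pb‖]

theorem lipschitzWith_one_sub (hconv : ConvexOn ℝ Set.univ f) {P : E → E}
    (hP : ∀ x, IsProxR f x (P x)) : LipschitzWith 1 fun x => x - P x :=
  LipschitzWith.of_dist_le_mul fun a b => by
    simpa [dist_eq_norm] using norm_sub_sub_le hconv (hP a) (hP b)

end IsProxR

theorem lipschitz_of_norm_sub_le_prox_norm_general
    (ℓ : ℝ) (f : H → ℝ)
    (hconv : ConvexOn ℝ Set.univ f) (hlsc : LowerSemicontinuous f)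
    (proxf : H → H) (hproxf : ∀ x, IsProxR f x (proxf x))
    (h : ∀ x y : H, ‖x‖ - ℓ ≤ ‖proxf (x + y) - y‖) :
    ∀ u v : H, |f u - f v| ≤ ℓ * ‖u - v‖ := by
  have hdisp : ∀ w, ‖w - proxf w‖ ≤ ℓ := fun w => by
    simpa using h (w - proxf w) (proxf w)
  have hdense : DenseRange proxf :=
    denseRange_of_lipschitzWith_one_sub (IsProxR.lipschitzWith_one_sub hconv hproxf) hdisp
  have hle : ∀ u v, f u ≤ f v + ℓ * ‖u - v‖ := fun u v =>
    hdense.induction_on u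
      (hlsc.isClosed_epigraph.preimage (continuous_id.prodMk (by fun_prop)))
      fun x => (hproxf x).le_add_mul_norm hconv (hdisp x) v
  intro u v
  rw [abs_sub_le_iff]
  constructor
  · linarith [hle u v]
  · rw [norm_sub_rev]
    linarith [hle v u]

/-- If `‖x‖ - ℓ ≤ ‖prox_f (x + y) - y‖` for all `x, y`, then the convex lower
semicontinuous function `f : H → ℝ` is `ℓ`-Lipschitz. -/
theorem lipschitz_of_norm_sub_le_prox_norm
    (ℓ : ℝ) (hℓ : 0 ≤ ℓ) (f : H → ℝ)
    (hconv : ConvexOn ℝ Set.univ f) (hlsc : LowerSemicontinuous f)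
    (proxf : H → H) (hproxf : ∀ x, IsProxR f x (proxf x))
    (h : ∀ x y : H, ‖x‖ - ℓ ≤ ‖proxf (x + y) - y‖) :
    ∀ u v : H, |f u - f v| ≤ ℓ * ‖u - v‖ :=
  lipschitz_of_norm_sub_le_prox_norm_general ℓ f hconv hlsc proxf hproxf h
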